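/- arXiv:1212.3314 — 3 statements merged into one kernel-verified Lean document; each statement's English description precedes it below -/
import Mathlib

section
/- Let x : ℝ^m → ℝ^N be a smooth function satisfying the multi-time Euler–Lagrange equations: (i) for all 1 ≤ α ≠ β ≤ m, ∂L_α/∂v_β(x, x_{t_1}, …, x_{t_m}) = 0; (ii) the functions ∂L_α/∂v_α(x, x_{t_1}, …, x_{t_m}) coincide for all α = 1, …, m, with common value a function p : ℝ^m → ℝ^N; (iii) ∂p/∂t_α = ∂L_α/∂x(x, x_{t_1}, …, x_{t_m}) for all α. Then for every smooth regular curve Γ : [0,1] → ℝ^m (with Γ′(s) ≠ 0 for all s) and every smooth variation δx : ℝ^m → ℝ^N that vanishes on a neighbourhood of the endpoints Γ(0) and Γ(1), the first variation satisfies d/dε|_{ε=0} S_Γ(x + ε δx) = 0. -/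
noncomputable section

/-- Partial derivative `x_{t_α}` of a multi-time function. -/
def pdv {m N : ℕ} (x : (Fin m → ℝ) → (Fin N → ℝ)) (α : Fin m) (t : Fin m → ℝ) :
    Fin N → ℝ :=
  fderiv ℝ x t (Pi.single α 1)

/-- The first jet `(x_{t_1}, …, x_{t_m})` of a multi-time function. -/
def jet {m N : ℕ} (x : (Fin m → ℝ) → (Fin N → ℝ)) (t : Fin m → ℝ) :
    Fin m → Fin N → ℝ :=
  fun β => pdv x β t

/-- Gradient `∂L/∂x` of a Lagrangian `L(x, v_1, …, v_m)` in the `x`-slot. -/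
def gradX {m N : ℕ} (L : (Fin N → ℝ) → (Fin m → (Fin N → ℝ)) → ℝ)
    (a : Fin N → ℝ) (V : Fin m → (Fin N → ℝ)) : Fin N → ℝ :=
  fun j => fderiv ℝ (fun a' => L a' V) a (Pi.single j 1)

/-- Gradient `∂L/∂v_β` of a Lagrangian `L(x, v_1, …, v_m)` in the `v_β`-slot. -/
def gradV {m N : ℕ} (L : (Fin N → ℝ) → (Fin m → (Fin N → ℝ)) → ℝ)
    (β : Fin m) (a : Fin N → ℝ) (V : Fin m → (Fin N → ℝ)) : Fin N → ℝ :=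
  fun j => fderiv ℝ (fun w => L a (Function.update V β w)) (V β) (Pi.single j 1)

/-- Action `S_Γ(x) = ∫₀¹ Σ_α L_α(x(Γ(s)), x_{t_1}(Γ(s)), …, x_{t_m}(Γ(s))) Γ_α'(s) ds`. -/
def action {m N : ℕ} (L : Fin m → (Fin N → ℝ) → (Fin m → (Fin N → ℝ)) → ℝ)
    (x : (Fin m → ℝ) → (Fin N → ℝ)) (Γ : ℝ → (Fin m → ℝ)) : ℝ :=
  ∫ s in (0:ℝ)..1, ∑ α, L α (x (Γ s)) (jet x (Γ s)) * deriv Γ s α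

/-! Along the variation `x + ε δx`, the `ε`-derivative at `0` of the integrand of `S_Γ` is
`Σ_α Γ'_α (∂L_α/∂x · δx + Σ_β ∂L_α/∂v_β · δx_{t_β})`. The Euler–Lagrange equations turn this into
`Σ_α Γ'_α (p_{t_α} · δx + p · δx_{t_α})`, which is the `s`-derivative of `p(Γ s) · δx(Γ s)`.
Differentiating under the integral sign, the first variation is therefore the boundary term
`[p · δx]` between `Γ 0` and `Γ 1`, where `δx` vanishes. -/

open scoped ContDiff

section Calculus

variable {ι E F G : Type*} [Fintype ι]
  [NormedAddCommGroup E] [NormedSpace ℝ E] [NormedAddCommGroup F] [NormedSpace ℝ F]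
  [NormedAddCommGroup G] [NormedSpace ℝ G]

theorem ContinuousLinearMap.apply_eq_sum_smul_single [DecidableEq ι] (φ : (ι → ℝ) →L[ℝ] F)
    (b : ι → ℝ) :
    φ b = ∑ i, b i • φ (Pi.single i 1) := by
  conv_lhs => rw [← Finset.univ_sum_single b]
  simp only [map_sum, ← map_smul, ← Pi.single_smul', smul_eq_mul, mul_one]

theorem fderiv_prod_pi_apply_eq_add_sum [DecidableEq ι] {f : E × (ι → F) → G} {a : E} {V : ι → F}
    (hf : DifferentiableAt ℝ f (a, V)) (b : E) (W : ι → F) :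
    fderiv ℝ f (a, V) (b, W) = fderiv ℝ (fun a' => f (a', V)) a b +
      ∑ i, fderiv ℝ (fun w => f (a, Function.update V i w)) (V i) (W i) := by
  set f' := fderiv ℝ f (a, V)
  have hfst : fderiv ℝ (fun a' => f (a', V)) a b = f' (b, 0) := by
    have := (hf.hasFDerivAt.comp a (hasFDerivAt_prodMk_left (𝕜 := ℝ) a V)).fderiv
    rw [Function.comp_def] at this
    rw [this]
    rfl
  have hsnd (i : ι) (w : F) :
      fderiv ℝ (fun w => f (a, Function.update V i w)) (V i) w = f' (0, Pi.single i w) := by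
    have hf' : HasFDerivAt f f' (a, Function.update V i (V i)) := by
      simpa using hf.hasFDerivAt
    have := (hf'.comp (V i)
      ((hasFDerivAt_const (𝕜 := ℝ) a (V i)).prodMk (hasFDerivAt_update V (V i)))).fderiv
    rw [Function.comp_def] at this
    have hsingle : (fun j => (Pi.single i (ContinuousLinearMap.id ℝ F) : ι → F →L[ℝ] F) j w) =
        Pi.single i w := by
      ext j
      rcases eq_or_ne j i with rfl | hji <;> simp [*]
    simp [this, hsingle]
  have hsplit : ((b, W) : E × (ι → F)) = (b, 0) + ∑ i, (0, Pi.single i (W i)) := by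
    ext <;> simp [Prod.fst_sum, Prod.snd_sum, Finset.univ_sum_single]
  rw [hfst, hsplit, map_add, map_sum]
  simp only [hsnd]

theorem DifferentiableAt.hasDerivAt_partial_fst {g : ℝ × ℝ → F} {ε s : ℝ}
    (hg : DifferentiableAt ℝ g (ε, s)) :
    HasDerivAt (fun ε' => g (ε', s)) (fderiv ℝ g (ε, s) (1, 0)) ε :=
  hg.hasFDerivAt.comp_hasDerivAt ε ((hasDerivAt_id ε).prodMk (hasDerivAt_const ε s))

theorem HasDerivAt.dotProduct {u v : ℝ → ι → ℝ} {u' v' : ι → ℝ} {s : ℝ}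
    (hu : HasDerivAt u u' s) (hv : HasDerivAt v v' s) :
    HasDerivAt (fun s => u s ⬝ᵥ v s) (u' ⬝ᵥ v s + u s ⬝ᵥ v') s := by
  have := HasDerivAt.fun_sum (u := Finset.univ) fun i _ =>
    (hasDerivAt_pi.1 hu i).fun_mul (hasDerivAt_pi.1 hv i)
  rwa [Finset.sum_add_distrib] at this

theorem hasDerivAt_intervalIntegral_of_contDiff {g : ℝ × ℝ → F} (hg : ContDiff ℝ 1 g)
    (a b ε₀ : ℝ) :
    HasDerivAt (fun ε => ∫ s in a..b, g (ε, s)) (∫ s in a..b, fderiv ℝ g (ε₀, s) (1, 0)) ε₀ := by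
  have hg' : Continuous fun q : ℝ × ℝ => fderiv ℝ g q (1, 0) :=
    (hg.continuous_fderiv one_ne_zero).clm_apply continuous_const
  have hslice (ε : ℝ) : Continuous fun s => g (ε, s) :=
    hg.continuous.comp (continuous_const.prodMk continuous_id)
  obtain ⟨C, hC⟩ := ((isCompact_closedBall ε₀ 1).prod isCompact_uIcc).exists_bound_of_continuousOn
    (hg'.continuousOn (s := Metric.closedBall ε₀ 1 ×ˢ Set.uIcc a b))
  refine (intervalIntegral.hasDerivAt_integral_of_dominated_loc_of_deriv_le
    (Metric.closedBall_mem_nhds ε₀ one_pos)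
    (.of_forall fun ε => (hslice ε).aestronglyMeasurable) ((hslice ε₀).intervalIntegrable a b)
    (hg'.comp (continuous_const.prodMk continuous_id)).aestronglyMeasurable
    (.of_forall fun s hs ε hε => hC (ε, s) ⟨hε, Set.uIoc_subset_uIcc hs⟩)
    intervalIntegrable_const
    (.of_forall fun s _ ε _ =>
      (hg.differentiable one_ne_zero (ε, s)).hasDerivAt_partial_fst)).2

end Calculus

section Lagrangian

variable {m N : ℕ}

theorem pdv_add_smul {x δx : (Fin m → ℝ) → Fin N → ℝ} {t : Fin m → ℝ}
    (hx : DifferentiableAt ℝ x t) (hδx : DifferentiableAt ℝ δx t) (ε : ℝ) (α : Fin m) :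
    pdv (fun t' => x t' + ε • δx t') α t = pdv x α t + ε • pdv δx α t := by
  have hεδx : DifferentiableAt ℝ (fun t' => ε • δx t') t := hδx.const_smul ε
  rw [pdv, fderiv_fun_add hx hεδx, fderiv_fun_const_smul hδx]
  rfl

theorem jet_add_smul {x δx : (Fin m → ℝ) → Fin N → ℝ} {t : Fin m → ℝ}
    (hx : DifferentiableAt ℝ x t) (hδx : DifferentiableAt ℝ δx t) (ε : ℝ) :
    jet (fun t' => x t' + ε • δx t') t = jet x t + ε • jet δx t :=
  funext (pdv_add_smul hx hδx ε)

theorem fderiv_apply_eq_sum_pdv (x : (Fin m → ℝ) → Fin N → ℝ) (t c : Fin m → ℝ) :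
    fderiv ℝ x t c = ∑ α, c α • pdv x α t :=
  (fderiv ℝ x t).apply_eq_sum_smul_single c

theorem contDiff_jet {x : (Fin m → ℝ) → Fin N → ℝ} (hx : ContDiff ℝ ∞ x) :
    ContDiff ℝ ∞ (jet x) :=
  contDiff_pi.2 fun _ => (hx.fderiv_right le_rfl).clm_apply contDiff_const

variable {L : (Fin N → ℝ) → (Fin m → Fin N → ℝ) → ℝ}

theorem gradX_dotProduct (a b : Fin N → ℝ) (V : Fin m → Fin N → ℝ) :
    gradX L a V ⬝ᵥ b = fderiv ℝ (fun a' => L a' V) a b := by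
  rw [ContinuousLinearMap.apply_eq_sum_smul_single]
  exact Finset.sum_congr rfl fun _ _ => mul_comm _ _

theorem gradV_dotProduct (β : Fin m) (a w : Fin N → ℝ) (V : Fin m → Fin N → ℝ) :
    gradV L β a V ⬝ᵥ w = fderiv ℝ (fun w' => L a (Function.update V β w')) (V β) w := by
  rw [ContinuousLinearMap.apply_eq_sum_smul_single]
  exact Finset.sum_congr rfl fun _ _ => mul_comm _ _

theorem fderiv_lagrangian_apply {a : Fin N → ℝ} {V : Fin m → Fin N → ℝ}
    (hL : DifferentiableAt ℝ (Function.uncurry L) (a, V))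
    (b : Fin N → ℝ) (W : Fin m → Fin N → ℝ) :
    fderiv ℝ (Function.uncurry L) (a, V) (b, W) =
      gradX L a V ⬝ᵥ b + ∑ β, gradV L β a V ⬝ᵥ W β := by
  rw [fderiv_prod_pi_apply_eq_add_sum hL]
  simp only [Function.uncurry_apply_pair, gradX_dotProduct, gradV_dotProduct]

theorem gradV_eq_fderiv {a : Fin N → ℝ} {V : Fin m → Fin N → ℝ}
    (hL : DifferentiableAt ℝ (Function.uncurry L) (a, V))
    (β : Fin m) (j : Fin N) :
    gradV L β a V j = fderiv ℝ (Function.uncurry L) (a, V)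
      (0, Pi.single β (Pi.single j 1)) := by
  rw [fderiv_lagrangian_apply hL, dotProduct_zero, zero_add,
    Finset.sum_eq_single β (fun γ _ hγ => by simp [hγ]) (by simp)]
  simp [dotProduct_single]

theorem contDiff_gradV
    (hL : ContDiff ℝ ∞ (Function.uncurry L)) (β : Fin m) :
    ContDiff ℝ ∞ (Function.uncurry (gradV L β)) := by
  refine contDiff_pi.2 fun j => ?_
  have hj : (fun q => Function.uncurry (gradV L β) q j) =
      fun q => fderiv ℝ (Function.uncurry L) q (0, Pi.single β (Pi.single j 1)) :=
    funext fun q => gradV_eq_fderiv (hL.differentiable (by simp) q) β j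
  rw [hj]
  exact (hL.fderiv_right le_rfl).clm_apply contDiff_const

theorem hasDerivAt_lagrangian_line {a b : Fin N → ℝ} {V : Fin m → Fin N → ℝ}
    (hL : DifferentiableAt ℝ (Function.uncurry L) (a, V))
    (W : Fin m → Fin N → ℝ) :
    HasDerivAt (fun ε : ℝ => L (a + ε • b) (V + ε • W))
      (gradX L a V ⬝ᵥ b + ∑ β, gradV L β a V ⬝ᵥ W β) 0 := by
  have hline : HasDerivAt (fun ε : ℝ => (a + ε • b, V + ε • W)) (b, W) 0 := by
    simpa using (((hasDerivAt_id (0 : ℝ)).smul_const b).const_add a).prodMk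
      (((hasDerivAt_id (0 : ℝ)).smul_const W).const_add V)
  rw [← fderiv_lagrangian_apply hL]
  exact hL.hasFDerivAt.comp_hasDerivAt_of_eq 0 hline (by simp)

end Lagrangian

section Variation

variable {m N : ℕ} {L : Fin m → (Fin N → ℝ) → (Fin m → Fin N → ℝ) → ℝ}

theorem hasDerivAt_sum_lagrangian_of_EL {a : Fin N → ℝ} {V : Fin m → Fin N → ℝ}
    {P : Fin N → ℝ} {P' : Fin m → Fin N → ℝ}
    (hL : ∀ α, DifferentiableAt ℝ (Function.uncurry (L α)) (a, V))
    (hEL1 : ∀ α β, α ≠ β → gradV (L α) β a V = 0) (hEL2 : ∀ α, gradV (L α) α a V = P)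
    (hEL3 : ∀ α, P' α = gradX (L α) a V) (b : Fin N → ℝ) (W : Fin m → Fin N → ℝ)
    (c : Fin m → ℝ) :
    HasDerivAt (fun ε : ℝ => ∑ α, L α (a + ε • b) (V + ε • W) * c α)
      (∑ α, c α * (P' α ⬝ᵥ b + P ⬝ᵥ W α)) 0 := by
  have hdiag (α : Fin m) : ∑ β, gradV (L α) β a V ⬝ᵥ W β = P ⬝ᵥ W α := by
    rw [Finset.sum_eq_single α (fun β _ hβ => by simp [hEL1 α β hβ.symm]) (by simp), hEL2]
  refine HasDerivAt.fun_sum fun α _ => ?_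
  rw [mul_comm, hEL3, ← hdiag]
  exact (hasDerivAt_lagrangian_line (hL α) W).mul_const (c α)

theorem contDiff_momentum
    (hL : ∀ α, ContDiff ℝ ∞ (Function.uncurry (L α)))
    {x p : (Fin m → ℝ) → Fin N → ℝ} (hx : ContDiff ℝ ∞ x)
    (hp : ∀ t α, gradV (L α) α (x t) (jet x t) = p t) :
    ContDiff ℝ ∞ p := by
  rcases isEmpty_or_nonempty (Fin m) with _ | ⟨⟨α⟩⟩
  · rw [show p = fun _ => p 0 from funext fun t => congrArg p (Subsingleton.elim t 0)]
    exact contDiff_const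
  · rw [show p = fun t => gradV (L α) α (x t) (jet x t) from funext fun t => (hp t α).symm]
    exact (contDiff_gradV (hL α) α).comp (hx.prodMk (contDiff_jet hx))

variable (L) in
def variationIntegrand (x δx : (Fin m → ℝ) → Fin N → ℝ) (Γ : ℝ → Fin m → ℝ) (q : ℝ × ℝ) : ℝ :=
  ∑ α, L α (x (Γ q.2) + q.1 • δx (Γ q.2)) (jet x (Γ q.2) + q.1 • jet δx (Γ q.2)) * deriv Γ q.2 α

theorem action_add_smul_eq_integral {x δx : (Fin m → ℝ) → Fin N → ℝ} (hx : Differentiable ℝ x)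
    (hδx : Differentiable ℝ δx) (Γ : ℝ → Fin m → ℝ) (ε : ℝ) :
    action L (fun t => x t + ε • δx t) Γ =
      ∫ s in (0 : ℝ)..1, variationIntegrand L x δx Γ (ε, s) := by
  simp only [action, variationIntegrand, jet_add_smul (hx _) (hδx _)]

theorem contDiff_variationIntegrand
    (hL : ∀ α, ContDiff ℝ ∞ (Function.uncurry (L α)))
    {x δx : (Fin m → ℝ) → Fin N → ℝ} (hx : ContDiff ℝ ∞ x) (hδx : ContDiff ℝ ∞ δx)
    {Γ : ℝ → Fin m → ℝ} (hΓ : ContDiff ℝ ∞ Γ) :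
    ContDiff ℝ ∞ (variationIntegrand L x δx Γ) := by
  have hΓs : ContDiff ℝ ∞ fun q : ℝ × ℝ => Γ q.2 := hΓ.comp contDiff_snd
  have hvar (y : (Fin m → ℝ) → Fin N → ℝ) (hy : ContDiff ℝ ∞ y) :
      ContDiff ℝ ∞ fun q : ℝ × ℝ => y (Γ q.2) := hy.comp hΓs
  refine ContDiff.sum fun α _ => ContDiff.mul ?_ ?_
  · exact (hL α).comp (((hvar x hx).add (contDiff_fst.smul (hvar δx hδx))).prodMk
      ((contDiff_jet hx).comp hΓs |>.add (contDiff_fst.smul ((contDiff_jet hδx).comp hΓs))))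
  · exact contDiff_pi.1 ((contDiff_infty_iff_deriv.1 hΓ).2.comp contDiff_snd) α

theorem hasDerivAt_momentum_dotProduct_of_EL
    (hL : ∀ α, ContDiff ℝ ∞ (Function.uncurry (L α)))
    {x p δx : (Fin m → ℝ) → Fin N → ℝ} (hx : ContDiff ℝ ∞ x) (hp : Differentiable ℝ p)
    (hδx : ContDiff ℝ ∞ δx) {Γ : ℝ → Fin m → ℝ} (hΓ : ContDiff ℝ ∞ Γ)
    (hEL1 : ∀ t α β, α ≠ β → gradV (L α) β (x t) (jet x t) = 0)
    (hEL2 : ∀ t α, gradV (L α) α (x t) (jet x t) = p t)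
    (hEL3 : ∀ t α, pdv p α t = gradX (L α) (x t) (jet x t)) (s : ℝ) :
    HasDerivAt (fun s => p (Γ s) ⬝ᵥ δx (Γ s))
      (fderiv ℝ (variationIntegrand L x δx Γ) (0, s) (1, 0)) s := by
  set t := Γ s
  have hvariation := hasDerivAt_sum_lagrangian_of_EL
    (fun α => (hL α).differentiable (by simp) (x t, jet x t))
    (hEL1 t) (hEL2 t) (hEL3 t) (δx t) (jet δx t) (deriv Γ s)
  rw [((contDiff_variationIntegrand hL hx hδx hΓ).differentiable (by simp)
    (0, s)).hasDerivAt_partial_fst.unique hvariation]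
  have hΓs : HasDerivAt Γ (deriv Γ s) s := (hΓ.differentiable (by simp) s).hasDerivAt
  have hpΓ : HasDerivAt (fun s => p (Γ s)) (fderiv ℝ p t (deriv Γ s)) s :=
    (hp t).hasFDerivAt.comp_hasDerivAt s hΓs
  have hδxΓ : HasDerivAt (fun s => δx (Γ s)) (fderiv ℝ δx t (deriv Γ s)) s :=
    (hδx.differentiable (by simp) t).hasFDerivAt.comp_hasDerivAt s hΓs
  refine (hpΓ.dotProduct hδxΓ).congr_deriv ?_
  rw [fderiv_apply_eq_sum_pdv, fderiv_apply_eq_sum_pdv, sum_dotProduct, dotProduct_sum,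
    ← Finset.sum_add_distrib]
  simp only [smul_dotProduct, dotProduct_smul, smul_eq_mul, mul_add]
  rfl

end Variation

/-- If a smooth `x : ℝ^m → ℝ^N` satisfies the multi-time Euler–Lagrange
equations, then `x` is a critical point of `S_Γ` for every smooth regular curve `Γ` and
every smooth variation vanishing near the endpoints. -/
theorem critical_of_multitime_EL {m N : ℕ}
    (L : Fin m → (Fin N → ℝ) → (Fin m → (Fin N → ℝ)) → ℝ)
    (hL : ∀ α, ContDiff ℝ (⊤ : ℕ∞)
      (fun q : (Fin N → ℝ) × (Fin m → (Fin N → ℝ)) => L α q.1 q.2))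
    (x : (Fin m → ℝ) → (Fin N → ℝ)) (hx : ContDiff ℝ (⊤ : ℕ∞) x)
    (hEL1 : ∀ t : Fin m → ℝ, ∀ α β : Fin m, α ≠ β → gradV (L α) β (x t) (jet x t) = 0)
    (p : (Fin m → ℝ) → (Fin N → ℝ))
    (hEL2 : ∀ (t : Fin m → ℝ) (α : Fin m), gradV (L α) α (x t) (jet x t) = p t)
    (hEL3 : ∀ (t : Fin m → ℝ) (α : Fin m), pdv p α t = gradX (L α) (x t) (jet x t)) :
    ∀ Γ : ℝ → (Fin m → ℝ), ContDiff ℝ (⊤ : ℕ∞) Γ →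
      (∀ s ∈ Set.Icc (0:ℝ) 1, deriv Γ s ≠ 0) →
      ∀ δx : (Fin m → ℝ) → (Fin N → ℝ), ContDiff ℝ (⊤ : ℕ∞) δx →
        (∀ᶠ t in nhds (Γ 0), δx t = 0) → (∀ᶠ t in nhds (Γ 1), δx t = 0) →
        deriv (fun ε : ℝ => action L (fun t => x t + ε • δx t) Γ) 0 = 0 := by
  intro Γ hΓ _ δx hδx hδx₀ hδx₁
  have hintegrand := contDiff_variationIntegrand hL hx hδx hΓ
  have hp := contDiff_momentum hL hx hEL2
  have haction : (fun ε : ℝ => action L (fun t => x t + ε • δx t) Γ) =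
      fun ε => ∫ s in (0 : ℝ)..1, variationIntegrand L x δx Γ (ε, s) :=
    funext (action_add_smul_eq_integral (hx.differentiable (by simp))
      (hδx.differentiable (by simp)) Γ)
  have hexact := hasDerivAt_momentum_dotProduct_of_EL hL hx (hp.differentiable (by simp)) hδx hΓ
    hEL1 hEL2 hEL3
  have hcont : Continuous fun s => fderiv ℝ (variationIntegrand L x δx Γ) (0, s) (1, 0) :=
    ((hintegrand.continuous_fderiv (by simp)).comp
      (continuous_const.prodMk continuous_id)).clm_apply continuous_const
  rw [haction, (hasDerivAt_intervalIntegral_of_contDiff (hintegrand.of_le (by simp)) 0 1 0).deriv,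
    intervalIntegral.integral_eq_sub_of_hasDerivAt (fun s _ => hexact s)
      (hcont.intervalIntegrable 0 1)]
  simp [hδx₀.self_of_nhds, hδx₁.self_of_nhds]
end
end

section
/- Suppose the multi-time Lagrangian 1-form is Legendre transformable, i.e., there exist smooth functions V_1, …, V_m : ℝ^N × ℝ^N → ℝ^N such that for all (x,p): ∂L_α/∂v_β(x, V_1(x,p), …, V_m(x,p)) = 0 for all α ≠ β and ∂L_α/∂v_α(x, V_1(x,p), …, V_m(x,p)) = p for all α, and define H_α(x,p) = ⟨p, V_α(x,p)⟩ − L_α(x, V_1(x,p), …, V_m(x,p)). Let x, p : ℝ^m → ℝ^N be smooth solutions of the multi-time Euler–Lagrange equations, i.e., x_{t_α} = V_α(x,p) and ∂p/∂t_α = ∂L_α/∂x(x, x_{t_1}, …, x_{t_m}) for all α. Then for all α, β and all t ∈ ℝ^m: ∂/∂t_α [L_β(x, x_{t_1}, …, x_{t_m})] − ∂/∂t_β [L_α(x, x_{t_1}, …, x_{t_m})] = {H_α, H_β}(x(t), p(t)). -/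
noncomputable section

/-- Gradient `∂H/∂x` of a function `H(x,p)` on phase space, in the `x`-slot. -/
def gradQ {N : ℕ} (H : (Fin N → ℝ) → (Fin N → ℝ) → ℝ) (a b : Fin N → ℝ) : Fin N → ℝ :=
  fun j => fderiv ℝ (fun a' => H a' b) a (Pi.single j 1)

/-- Gradient `∂H/∂p` of a function `H(x,p)` on phase space, in the `p`-slot. -/
def gradP {N : ℕ} (H : (Fin N → ℝ) → (Fin N → ℝ) → ℝ) (a b : Fin N → ℝ) : Fin N → ℝ :=
  fun j => fderiv ℝ (fun b' => H a b') b (Pi.single j 1)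

/-- Canonical Poisson bracket `{F,G} = ⟨∂F/∂x, ∂G/∂p⟩ − ⟨∂F/∂p, ∂G/∂x⟩`. -/
def poisson {N : ℕ} (F G : (Fin N → ℝ) → (Fin N → ℝ) → ℝ) (a b : Fin N → ℝ) : ℝ :=
  ∑ j, (gradQ F a b j * gradP G a b j - gradP F a b j * gradQ G a b j)

/-- Partial derivative `∂f/∂t_α` of a scalar function of multi-time. -/
def pdvS {m : ℕ} (f : (Fin m → ℝ) → ℝ) (α : Fin m) (t : Fin m → ℝ) : ℝ :=
  fderiv ℝ f t (Pi.single α 1)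

/-!
Differentiating `L_β(x, x_{t_1}, …, x_{t_m})` in `t_α` by the chain rule, the Legendre conditions
kill every velocity slot except the `β`-th, where `∂L_β/∂v_β = p`. Hence
`∂_{t_α} L_β = ⟨x_{t_α}, ∂L_β/∂x⟩ + ⟨x_{t_α t_β}, p⟩`, and the second-derivative term cancels in
`∂_{t_α} L_β − ∂_{t_β} L_α` by symmetry of mixed partials. The same computation applied to
`H_α = ⟨p, V_α⟩ − L_α(x, V)` gives `∂H_α/∂x = −∂L_α/∂x` and `∂H_α/∂p = V_α`, so
`{H_α, H_β} = ⟨V_α, ∂L_β/∂x⟩ − ⟨V_β, ∂L_α/∂x⟩`, which is the same expression once `x_{t_α} = V_α`.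
-/

open Function

section Calculus

variable {E F G : Type*} [NormedAddCommGroup E] [NormedSpace ℝ E]
  [NormedAddCommGroup F] [NormedSpace ℝ F] [NormedAddCommGroup G] [NormedSpace ℝ G]

theorem ContinuousLinearMap.apply_eq_dotProduct {N : ℕ} (φ : (Fin N → ℝ) →L[ℝ] ℝ)
    (w : Fin N → ℝ) : φ w = w ⬝ᵥ fun j => φ (Pi.single j 1) := by
  conv_lhs => rw [← Finset.univ_sum_single w]
  simp only [map_sum, dotProduct]
  refine Finset.sum_congr rfl fun j _ => ?_
  rw [← smul_eq_mul, ← map_smul, ← Pi.single_smul, smul_eq_mul, mul_one]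

theorem fderiv_curry_left {f : F → G → E} {a : F} {b : G}
    (hf : DifferentiableAt ℝ (fun q : F × G => f q.1 q.2) (a, b)) (u : F) :
    fderiv ℝ (fun a' => f a' b) a u = fderiv ℝ (fun q : F × G => f q.1 q.2) (a, b) (u, 0) := by
  have h := hf.hasFDerivAt.comp a (hasFDerivAt_prodMk_left (𝕜 := ℝ) a b)
  exact congrArg (· u) h.fderiv

theorem fderiv_curry_right {f : F → G → E} {a : F} {b : G}
    (hf : DifferentiableAt ℝ (fun q : F × G => f q.1 q.2) (a, b)) (w : G) :
    fderiv ℝ (fun b' => f a b') b w = fderiv ℝ (fun q : F × G => f q.1 q.2) (a, b) (0, w) := by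
  have h := hf.hasFDerivAt.comp b (hasFDerivAt_prodMk_right (𝕜 := ℝ) a b)
  exact congrArg (· w) h.fderiv

theorem fderiv_comp_update {ι : Type*} [Fintype ι] [DecidableEq ι] {f : (ι → F) → E}
    {W : ι → F} (hf : DifferentiableAt ℝ f W) (γ : ι) (v : F) :
    fderiv ℝ (fun w => f (update W γ w)) (W γ) v = fderiv ℝ f W (Pi.single γ v) := by
  rw [← update_eq_self γ W] at hf
  have h : HasFDerivAt (fun w => f (update W γ w)) _ (W γ) :=
    hf.hasFDerivAt.comp (W γ) (hasFDerivAt_update W (W γ))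
  rw [h.fderiv, update_eq_self, ContinuousLinearMap.comp_apply]
  congr 1
  ext i
  rcases eq_or_ne i γ with rfl | hi
  · simp
  · simp [hi]

theorem DifferentiableAt.dotProduct {N : ℕ} {f g : E → Fin N → ℝ} {e : E}
    (hf : DifferentiableAt ℝ f e) (hg : DifferentiableAt ℝ g e) :
    DifferentiableAt ℝ (fun e' => f e' ⬝ᵥ g e') e :=
  DifferentiableAt.fun_sum fun i _ =>
    (differentiableAt_pi.1 hf i).mul (differentiableAt_pi.1 hg i)

theorem fderiv_dotProduct {N : ℕ} {f g : E → Fin N → ℝ} {e : E}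
    (hf : DifferentiableAt ℝ f e) (hg : DifferentiableAt ℝ g e) (u : E) :
    fderiv ℝ (fun e' => f e' ⬝ᵥ g e') e u = fderiv ℝ f e u ⬝ᵥ g e + f e ⬝ᵥ fderiv ℝ g e u := by
  have hfi : ∀ i, DifferentiableAt ℝ (fun e' => f e' i) e := differentiableAt_pi.1 hf
  have hgi : ∀ i, DifferentiableAt ℝ (fun e' => g e' i) e := differentiableAt_pi.1 hg
  simp only [dotProduct]
  rw [fderiv_fun_sum (A := fun i e' => f e' i * g e' i) fun i _ => (hfi i).mul (hgi i),
    sum_apply, ← Finset.sum_add_distrib]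
  refine Finset.sum_congr rfl fun i _ => ?_
  rw [fderiv_fun_mul (hfi i) (hgi i), fderiv_apply hf, fderiv_apply hg]
  simp only [add_apply, smul_apply,
    ContinuousLinearMap.comp_apply, ContinuousLinearMap.proj_apply, smul_eq_mul]
  ring

end Calculus

section Lagrangian

variable {E : Type*} [NormedAddCommGroup E] [NormedSpace ℝ E] {m N : ℕ}
  {L : (Fin N → ℝ) → (Fin m → Fin N → ℝ) → ℝ} {a : Fin N → ℝ} {W : Fin m → Fin N → ℝ}

theorem dotProduct_gradX (hL : DifferentiableAt ℝ (fun q : _ × _ => L q.1 q.2) (a, W))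
    (u : Fin N → ℝ) :
    u ⬝ᵥ gradX L a W = fderiv ℝ (fun q : _ × _ => L q.1 q.2) (a, W) (u, 0) := by
  rw [← fderiv_curry_left hL u]
  exact (ContinuousLinearMap.apply_eq_dotProduct _ u).symm

theorem dotProduct_gradV (hL : DifferentiableAt ℝ (fun q : _ × _ => L q.1 q.2) (a, W))
    (γ : Fin m) (w : Fin N → ℝ) :
    w ⬝ᵥ gradV L γ a W = fderiv ℝ (fun q : _ × _ => L q.1 q.2) (a, W) (0, Pi.single γ w) := by
  have hLa : DifferentiableAt ℝ (L a) W :=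
    hL.comp W (differentiableAt_const a |>.prodMk differentiableAt_id)
  rw [← fderiv_curry_right hL, ← fderiv_comp_update hLa]
  exact (ContinuousLinearMap.apply_eq_dotProduct _ w).symm

theorem fderiv_comp_lagrangian {c : E → Fin N → ℝ} {G : E → Fin m → Fin N → ℝ} {e : E}
    (hL : DifferentiableAt ℝ (fun q : _ × _ => L q.1 q.2) (c e, G e))
    (hc : DifferentiableAt ℝ c e) (hG : DifferentiableAt ℝ G e) (u : E) :
    fderiv ℝ (fun e' => L (c e') (G e')) e u =
      fderiv ℝ c e u ⬝ᵥ gradX L (c e) (G e) + ∑ γ, fderiv ℝ G e u γ ⬝ᵥ gradV L γ (c e) (G e) := by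
  have h := hL.hasFDerivAt.comp e (hc.hasFDerivAt.prodMk hG.hasFDerivAt)
  simp only [dotProduct_gradX hL, dotProduct_gradV hL, ← map_sum, ← map_add]
  rw [show (fun e' => L (c e') (G e')) = (fun q : _ × _ => L q.1 q.2) ∘ fun e' => (c e', G e')
    from rfl, h.fderiv, ContinuousLinearMap.comp_apply]
  congr 1
  refine Prod.ext ?_ ?_
  · simp [Prod.fst_sum]
  · simp [Prod.snd_sum, Finset.univ_sum_single]

theorem fderiv_comp_lagrangian_of_legendre
    {c : E → Fin N → ℝ} {G : E → Fin m → Fin N → ℝ} {e : E} {α : Fin m} {b : Fin N → ℝ}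
    (hL : DifferentiableAt ℝ (fun q : _ × _ => L q.1 q.2) (c e, G e))
    (hne : ∀ γ, α ≠ γ → gradV L γ (c e) (G e) = 0) (hα : gradV L α (c e) (G e) = b)
    (hc : DifferentiableAt ℝ c e) (hG : DifferentiableAt ℝ G e) (u : E) :
    fderiv ℝ (fun e' => L (c e') (G e')) e u =
      fderiv ℝ c e u ⬝ᵥ gradX L (c e) (G e) + fderiv ℝ G e u α ⬝ᵥ b := by
  rw [fderiv_comp_lagrangian hL hc hG, Finset.sum_eq_single α, hα]
  · intro γ _ hγ
    rw [hne γ (Ne.symm hγ), dotProduct_zero]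
  · simp

end Lagrangian

section Hamiltonian

variable {m N : ℕ} {L : (Fin N → ℝ) → (Fin m → Fin N → ℝ) → ℝ}
  {V : Fin m → (Fin N → ℝ) → (Fin N → ℝ) → (Fin N → ℝ)} {H : (Fin N → ℝ) → (Fin N → ℝ) → ℝ}
  {α : Fin m}

theorem differentiable_hamiltonian (hL : Differentiable ℝ (fun q : _ × _ => L q.1 q.2))
    (hV : ∀ γ, Differentiable ℝ (fun q : _ × _ => V γ q.1 q.2))
    (hH : ∀ a b, H a b = b ⬝ᵥ V α a b - L a (fun γ => V γ a b)) :
    Differentiable ℝ (fun q : _ × _ => H q.1 q.2) := by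
  intro q
  simp only [hH]
  exact (differentiableAt_snd.dotProduct (hV α q)).sub
    ((hL _).comp q (differentiableAt_fst.prodMk (differentiableAt_pi.2 fun γ => hV γ q)))

theorem fderiv_hamiltonian (hL : Differentiable ℝ (fun q : _ × _ => L q.1 q.2))
    (hV : ∀ γ, Differentiable ℝ (fun q : _ × _ => V γ q.1 q.2))
    (hLeg1 : ∀ a b β, α ≠ β → gradV L β a (fun γ => V γ a b) = 0)
    (hLeg2 : ∀ a b, gradV L α a (fun γ => V γ a b) = b)
    (hH : ∀ a b, H a b = b ⬝ᵥ V α a b - L a (fun γ => V γ a b)) (a b u w : Fin N → ℝ) :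
    fderiv ℝ (fun q : _ × _ => H q.1 q.2) (a, b) (u, w) =
      w ⬝ᵥ V α a b - u ⬝ᵥ gradX L a (fun γ => V γ a b) := by
  have hW : DifferentiableAt ℝ (fun q : _ × _ => fun γ => V γ q.1 q.2) (a, b) :=
    differentiableAt_pi.2 fun γ => hV γ _
  have hLW : DifferentiableAt ℝ (fun q : _ × _ => L q.1 (fun γ => V γ q.1 q.2)) (a, b) :=
    (hL _).comp _ (differentiableAt_fst.prodMk hW)
  simp only [hH]
  rw [fderiv_fun_sub (differentiableAt_snd.dotProduct (hV α _)) hLW, sub_apply,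
    fderiv_dotProduct differentiableAt_snd (hV α _),
    fderiv_comp_lagrangian_of_legendre (hL _) (hLeg1 a b) (hLeg2 a b) differentiableAt_fst hW,
    fderiv_apply hW α]
  simp only [fderiv_snd, fderiv_fst, ContinuousLinearMap.coe_snd', ContinuousLinearMap.coe_fst',
    ContinuousLinearMap.comp_apply, ContinuousLinearMap.proj_apply, dotProduct_comm b,
    add_sub_add_right_eq_sub]

theorem gradQ_hamiltonian (hL : Differentiable ℝ (fun q : _ × _ => L q.1 q.2))
    (hV : ∀ γ, Differentiable ℝ (fun q : _ × _ => V γ q.1 q.2))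
    (hLeg1 : ∀ a b β, α ≠ β → gradV L β a (fun γ => V γ a b) = 0)
    (hLeg2 : ∀ a b, gradV L α a (fun γ => V γ a b) = b)
    (hH : ∀ a b, H a b = b ⬝ᵥ V α a b - L a (fun γ => V γ a b)) (a b : Fin N → ℝ) :
    gradQ H a b = -gradX L a (fun γ => V γ a b) := by
  ext j
  rw [gradQ, fderiv_curry_left (differentiable_hamiltonian hL hV hH _),
    fderiv_hamiltonian hL hV hLeg1 hLeg2 hH, zero_dotProduct, single_one_dotProduct, zero_sub,
    Pi.neg_apply]

theorem gradP_hamiltonian (hL : Differentiable ℝ (fun q : _ × _ => L q.1 q.2))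
    (hV : ∀ γ, Differentiable ℝ (fun q : _ × _ => V γ q.1 q.2))
    (hLeg1 : ∀ a b β, α ≠ β → gradV L β a (fun γ => V γ a b) = 0)
    (hLeg2 : ∀ a b, gradV L α a (fun γ => V γ a b) = b)
    (hH : ∀ a b, H a b = b ⬝ᵥ V α a b - L a (fun γ => V γ a b)) (a b : Fin N → ℝ) :
    gradP H a b = V α a b := by
  ext j
  rw [gradP, fderiv_curry_right (differentiable_hamiltonian hL hV hH _),
    fderiv_hamiltonian hL hV hLeg1 hLeg2 hH, zero_dotProduct, single_one_dotProduct, sub_zero]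

end Hamiltonian

theorem poisson_hamiltonian {m N : ℕ} {L : Fin m → (Fin N → ℝ) → (Fin m → Fin N → ℝ) → ℝ}
    {V : Fin m → (Fin N → ℝ) → (Fin N → ℝ) → (Fin N → ℝ)}
    {H : Fin m → (Fin N → ℝ) → (Fin N → ℝ) → ℝ}
    (hL : ∀ α, Differentiable ℝ (fun q : _ × _ => L α q.1 q.2))
    (hV : ∀ α, Differentiable ℝ (fun q : _ × _ => V α q.1 q.2))
    (hLeg1 : ∀ a b α β, α ≠ β → gradV (L α) β a (fun γ => V γ a b) = 0)
    (hLeg2 : ∀ a b α, gradV (L α) α a (fun γ => V γ a b) = b)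
    (hH : ∀ α a b, H α a b = b ⬝ᵥ V α a b - L α a (fun γ => V γ a b)) (α β : Fin m)
    (a b : Fin N → ℝ) :
    poisson (H α) (H β) a b = V α a b ⬝ᵥ gradX (L β) a (fun γ => V γ a b) -
      V β a b ⬝ᵥ gradX (L α) a (fun γ => V γ a b) := by
  have hQ δ := gradQ_hamiltonian (hL δ) hV (hLeg1 · · δ) (hLeg2 · · δ) (hH δ) a b
  have hP δ := gradP_hamiltonian (hL δ) hV (hLeg1 · · δ) (hLeg2 · · δ) (hH δ) a b
  simp only [poisson, hQ, hP, dotProduct, Pi.neg_apply, ← Finset.sum_sub_distrib]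
  exact Finset.sum_congr rfl fun j _ => by ring

section Solution

variable {m N : ℕ} {x : (Fin m → ℝ) → Fin N → ℝ} {t : Fin m → ℝ}

theorem hasFDerivAt_jet (hx : DifferentiableAt ℝ (fderiv ℝ x) t) :
    HasFDerivAt (jet x) (.pi fun γ => (ContinuousLinearMap.apply ℝ (Fin N → ℝ)
      (Pi.single γ 1)).comp (fderiv ℝ (fderiv ℝ x) t)) t :=
  hasFDerivAt_pi.2 fun γ => by
    exact (ContinuousLinearMap.apply ℝ _ (Pi.single γ 1)).hasFDerivAt.comp t hx.hasFDerivAt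

theorem pdvS_comp_jet_of_legendre {L : (Fin N → ℝ) → (Fin m → Fin N → ℝ) → ℝ} {δ : Fin m}
    {b : Fin N → ℝ} (hL : DifferentiableAt ℝ (fun q : _ × _ => L q.1 q.2) (x t, jet x t))
    (hne : ∀ γ, δ ≠ γ → gradV L γ (x t) (jet x t) = 0) (hδ : gradV L δ (x t) (jet x t) = b)
    (hx : DifferentiableAt ℝ x t) (hx' : DifferentiableAt ℝ (fderiv ℝ x) t) (σ : Fin m) :
    pdvS (fun s => L (x s) (jet x s)) σ t =
      pdv x σ t ⬝ᵥ gradX L (x t) (jet x t) +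
        fderiv ℝ (fderiv ℝ x) t (Pi.single σ 1) (Pi.single δ 1) ⬝ᵥ b := by
  rw [pdvS, fderiv_comp_lagrangian_of_legendre hL hne hδ hx
    (hasFDerivAt_jet hx').differentiableAt, (hasFDerivAt_jet hx').fderiv]
  rfl

end Solution

theorem almost_closedness_general {m N : ℕ}
    (L : Fin m → (Fin N → ℝ) → (Fin m → (Fin N → ℝ)) → ℝ)
    (hL : ∀ α, ContDiff ℝ (⊤ : ℕ∞)
      (fun q : (Fin N → ℝ) × (Fin m → (Fin N → ℝ)) => L α q.1 q.2))
    (V : Fin m → (Fin N → ℝ) → (Fin N → ℝ) → (Fin N → ℝ))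
    (hV : ∀ α, ContDiff ℝ (⊤ : ℕ∞)
      (fun q : (Fin N → ℝ) × (Fin N → ℝ) => V α q.1 q.2))
    (hLeg1 : ∀ (a b : Fin N → ℝ) (α β : Fin m), α ≠ β →
      gradV (L α) β a (fun γ => V γ a b) = 0)
    (hLeg2 : ∀ (a b : Fin N → ℝ) (α : Fin m),
      gradV (L α) α a (fun γ => V γ a b) = b)
    (H : Fin m → (Fin N → ℝ) → (Fin N → ℝ) → ℝ)
    (hH : ∀ (α : Fin m) (a b : Fin N → ℝ),
      H α a b = (∑ j, b j * V α a b j) - L α a (fun γ => V γ a b))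
    (x p : (Fin m → ℝ) → (Fin N → ℝ))
    (hx : ContDiff ℝ (⊤ : ℕ∞) x)
    (hEL1 : ∀ (t : Fin m → ℝ) (α : Fin m), pdv x α t = V α (x t) (p t)) :
    ∀ (α β : Fin m) (t : Fin m → ℝ),
      pdvS (fun s => L β (x s) (jet x s)) α t - pdvS (fun s => L α (x s) (jet x s)) β t =
        poisson (H α) (H β) (x t) (p t) := by
  intro α β t
  have hL' α : Differentiable ℝ (fun q : _ × _ => L α q.1 q.2) :=
    (hL α).differentiable (by simp)
  have hV' α : Differentiable ℝ (fun q : _ × _ => V α q.1 q.2) :=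
    (hV α).differentiable (by simp)
  have hx2 : ContDiff ℝ 2 x := hx.of_le (by norm_cast)
  have hxd : Differentiable ℝ x := hx2.differentiable (by simp)
  have hx'd : Differentiable ℝ (fderiv ℝ x) :=
    (hx2.fderiv_right (m := 1) le_rfl).differentiable one_ne_zero
  have hjet : jet x t = fun γ => V γ (x t) (p t) := funext (hEL1 t)
  have hdL δ σ := pdvS_comp_jet_of_legendre (hL' δ _) (hjet ▸ hLeg1 _ (p t) δ)
    (hjet ▸ hLeg2 _ (p t) δ) (hxd t) (hx'd t) σ
  have hsymm :=
    (hx2.contDiffAt (x := t)).isSymmSndFDerivAt (by simp) (Pi.single α 1) (Pi.single β 1)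
  rw [hdL β α, hdL α β, hEL1, hEL1, hjet, hsymm, poisson_hamiltonian hL' hV' hLeg1 hLeg2 hH]
  ring

/-- For a Legendre transformable multi-time Lagrangian 1-form and a smooth
solution `(x,p)` of the multi-time Euler–Lagrange equations,
`∂_{t_α} L_β − ∂_{t_β} L_α = {H_α, H_β}` along the solution. -/
theorem almost_closedness {m N : ℕ}
    (L : Fin m → (Fin N → ℝ) → (Fin m → (Fin N → ℝ)) → ℝ)
    (hL : ∀ α, ContDiff ℝ (⊤ : ℕ∞)
      (fun q : (Fin N → ℝ) × (Fin m → (Fin N → ℝ)) => L α q.1 q.2))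
    (V : Fin m → (Fin N → ℝ) → (Fin N → ℝ) → (Fin N → ℝ))
    (hV : ∀ α, ContDiff ℝ (⊤ : ℕ∞)
      (fun q : (Fin N → ℝ) × (Fin N → ℝ) => V α q.1 q.2))
    (hLeg1 : ∀ (a b : Fin N → ℝ) (α β : Fin m), α ≠ β →
      gradV (L α) β a (fun γ => V γ a b) = 0)
    (hLeg2 : ∀ (a b : Fin N → ℝ) (α : Fin m),
      gradV (L α) α a (fun γ => V γ a b) = b)
    (H : Fin m → (Fin N → ℝ) → (Fin N → ℝ) → ℝ)
    (hH : ∀ (α : Fin m) (a b : Fin N → ℝ),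
      H α a b = (∑ j, b j * V α a b j) - L α a (fun γ => V γ a b))
    (x p : (Fin m → ℝ) → (Fin N → ℝ))
    (hx : ContDiff ℝ (⊤ : ℕ∞) x) (hp : ContDiff ℝ (⊤ : ℕ∞) p)
    (hEL1 : ∀ (t : Fin m → ℝ) (α : Fin m), pdv x α t = V α (x t) (p t))
    (hEL2 : ∀ (t : Fin m → ℝ) (α : Fin m), pdv p α t = gradX (L α) (x t) (jet x t)) :
    ∀ (α β : Fin m) (t : Fin m → ℝ),
      pdvS (fun s => L β (x s) (jet x s)) α t - pdvS (fun s => L α (x s) (jet x s)) β t =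
        poisson (H α) (H β) (x t) (p t) :=
  almost_closedness_general L hL V hV hLeg1 hLeg2 H hH x p hx hEL1
end
end

section
/- Suppose the multi-time Lagrangian 1-form is Legendre transformable with smooth solving functions V_1, …, V_m : ℝ^N × ℝ^N → ℝ^N and Hamilton functions H_α(x,p) = ⟨p, V_α(x,p)⟩ − L_α(x, V_1(x,p), …, V_m(x,p)), and that all pairwise Poisson brackets vanish identically: {H_α, H_β} = 0 on ℝ^N × ℝ^N. Let x, p : ℝ^m → ℝ^N be smooth solutions of the multi-time Euler–Lagrange equations, i.e., x_{t_α} = V_α(x,p) and ∂p/∂t_α = ∂L_α/∂x(x, x_{t_1}, …, x_{t_m}) for all α. Then the value of the action is independent of the path: for any two smooth curves Γ_0, Γ_1 : [0,1] → ℝ^m with Γ_0(0) = Γ_1(0) and Γ_0(1) = Γ_1(1), one has S_{Γ_0}(x) = S_{Γ_1}(x). -/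
/-
Along a solution, write `ℓ_α(t) = L_α(x, x_{t_1}, …, x_{t_m})`. The chain rule and the Legendre
conditions give `∂ℓ_α/∂t_β = ⟨∂L_α/∂x, V_β⟩ + ⟨p, x_{t_α t_β}⟩`. Since `∂H_α/∂p = V_α` and
`∂H_α/∂x = -∂L_α/∂x` (the terms containing derivatives of `V` cancel, again by Legendre), the
involutivity `{H_α, H_β} = 0` says precisely that `⟨∂L_α/∂x, V_β⟩` is symmetric in `α, β`; the
second term is symmetric by Schwarz. Hence the 1-form `Σ_α ℓ_α dt_α` is closed on `ℝ^m`, so it is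
exact by the Poincaré lemma, and the action, its integral along the curve, depends only on the
endpoints.
-/

noncomputable section

theorem ContinuousLinearMap.apply_eq_sum_mul_single {ι : Type*} [Fintype ι] [DecidableEq ι]
    (D : (ι → ℝ) →L[ℝ] ℝ) (u : ι → ℝ) : D u = ∑ j, D (Pi.single j 1) * u j := by
  conv_lhs => rw [← Finset.univ_sum_single u]
  refine (map_sum D _ _).trans (Finset.sum_congr rfl fun j _ => ?_)
  rw [mul_comm, ← smul_eq_mul, ← map_smul, ← Pi.single_smul', smul_eq_mul, mul_one]

section ClosedForm

variable {E F : Type*} [NormedAddCommGroup E] [NormedSpace ℝ E]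
  [NormedAddCommGroup F] [NormedSpace ℝ F] [CompleteSpace F]

theorem integral_apply_deriv_eq_sub_of_hasFDerivAt {ω : E → E →L[ℝ] F} {f : E → F}
    (hω : Continuous ω) (hf : ∀ z, HasFDerivAt f (ω z) z) {Γ : ℝ → E} (hΓ : ContDiff ℝ 1 Γ)
    (a b : ℝ) :
    ∫ s in a..b, ω (Γ s) (deriv Γ s) = f (Γ b) - f (Γ a) := by
  refine intervalIntegral.integral_eq_sub_of_hasDerivAt (f := f ∘ Γ) (fun s _ => ?_) ?_
  · exact (hf (Γ s)).comp_hasDerivAt s ((hΓ.differentiable one_ne_zero) s).hasDerivAt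
  · exact ((hω.comp hΓ.continuous).clm_apply (hΓ.continuous_deriv le_rfl)).intervalIntegrable _ _

theorem integral_apply_deriv_eq_of_fderiv_symmetric {ω : E → E →L[ℝ] F}
    (hω : Differentiable ℝ ω) (hdω : ∀ z v w, fderiv ℝ ω z v w = fderiv ℝ ω z w v)
    {Γ₀ Γ₁ : ℝ → E} (hΓ₀ : ContDiff ℝ 1 Γ₀) (hΓ₁ : ContDiff ℝ 1 Γ₁)
    (h0 : Γ₀ 0 = Γ₁ 0) (h1 : Γ₀ 1 = Γ₁ 1) :
    ∫ s in (0 : ℝ)..1, ω (Γ₀ s) (deriv Γ₀ s) = ∫ s in (0 : ℝ)..1, ω (Γ₁ s) (deriv Γ₁ s) := by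
  obtain ⟨f, hf⟩ := convex_univ.exists_forall_hasFDerivAt_of_fderiv_symmetric isOpen_univ
    hω.differentiableOn fun z _ => hdω z
  simp only [Set.mem_univ, forall_const] at hf
  rw [integral_apply_deriv_eq_sub_of_hasFDerivAt hω.continuous hf hΓ₀,
    integral_apply_deriv_eq_sub_of_hasFDerivAt hω.continuous hf hΓ₁, h0, h1]

end ClosedForm

section CoordOneForm

variable {ι : Type*} [Fintype ι]

def coordOneForm (ℓ : ι → (ι → ℝ) → ℝ) (t : ι → ℝ) : (ι → ℝ) →L[ℝ] ℝ :=
  ∑ α, ℓ α t • ContinuousLinearMap.proj α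

@[simp]
theorem coordOneForm_apply (ℓ : ι → (ι → ℝ) → ℝ) (t v : ι → ℝ) :
    coordOneForm ℓ t v = ∑ α, ℓ α t * v α := by
  simp [coordOneForm]

theorem hasFDerivAt_coordOneForm {ℓ : ι → (ι → ℝ) → ℝ} {t : ι → ℝ}
    (hℓ : ∀ α, DifferentiableAt ℝ (ℓ α) t) :
    HasFDerivAt (coordOneForm ℓ)
      (∑ α, (fderiv ℝ (ℓ α) t).smulRight (ContinuousLinearMap.proj α)) t :=
  HasFDerivAt.fun_sum fun α _ =>
    (hℓ α).hasFDerivAt.smul_const (ContinuousLinearMap.proj (R := ℝ) (φ := fun _ : ι => ℝ) α)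

theorem differentiable_coordOneForm {ℓ : ι → (ι → ℝ) → ℝ} (hℓ : ∀ α, Differentiable ℝ (ℓ α)) :
    Differentiable ℝ (coordOneForm ℓ) :=
  fun t => (hasFDerivAt_coordOneForm fun α => hℓ α t).differentiableAt

theorem fderiv_coordOneForm_apply_apply {ℓ : ι → (ι → ℝ) → ℝ} {t : ι → ℝ}
    (hℓ : ∀ α, DifferentiableAt ℝ (ℓ α) t) (v w : ι → ℝ) :
    fderiv ℝ (coordOneForm ℓ) t v w = ∑ α, fderiv ℝ (ℓ α) t v * w α := by
  simp [(hasFDerivAt_coordOneForm hℓ).fderiv]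

theorem fderiv_coordOneForm_symmetric [DecidableEq ι] {ℓ : ι → (ι → ℝ) → ℝ} {t : ι → ℝ}
    (hℓ : ∀ α, DifferentiableAt ℝ (ℓ α) t)
    (hclosed : ∀ α β, fderiv ℝ (ℓ α) t (Pi.single β 1) = fderiv ℝ (ℓ β) t (Pi.single α 1))
    (v w : ι → ℝ) :
    fderiv ℝ (coordOneForm ℓ) t v w = fderiv ℝ (coordOneForm ℓ) t w v := by
  have expand (u : ι → ℝ) (α : ι) := (fderiv ℝ (ℓ α) t).apply_eq_sum_mul_single u
  simp only [fderiv_coordOneForm_apply_apply hℓ, expand v, expand w, Finset.sum_mul]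
  rw [Finset.sum_comm]
  exact Finset.sum_congr rfl fun β _ => Finset.sum_congr rfl fun α _ => by rw [hclosed]; ring

end CoordOneForm

section PartialDeriv

variable {E F G : Type*} [NormedAddCommGroup E] [NormedSpace ℝ E] [NormedAddCommGroup F]
  [NormedSpace ℝ F] [NormedAddCommGroup G] [NormedSpace ℝ G]

theorem fderiv_comp_prodMk_left_apply {f : E × F → G} {a : E} {b : F}
    (hf : DifferentiableAt ℝ f (a, b)) (u : E) :
    fderiv ℝ (fun a' => f (a', b)) a u = fderiv ℝ f (a, b) (u, 0) :=
  congrArg (· u) (hf.hasFDerivAt.comp a (hasFDerivAt_prodMk_left (𝕜 := ℝ) a b)).fderiv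

theorem fderiv_comp_prodMk_right_apply {f : E × F → G} {a : E} {b : F}
    (hf : DifferentiableAt ℝ f (a, b)) (v : F) :
    fderiv ℝ (fun b' => f (a, b')) b v = fderiv ℝ f (a, b) (0, v) :=
  congrArg (· v) (hf.hasFDerivAt.comp b (hasFDerivAt_prodMk_right (𝕜 := ℝ) a b)).fderiv

theorem fderiv_comp_update_apply {ι : Type*} [Fintype ι] [DecidableEq ι] {g : (ι → E) → G}
    {W : ι → E} (hg : DifferentiableAt ℝ g W) (i : ι) (k : E) :
    fderiv ℝ (fun w => g (Function.update W i w)) (W i) k = fderiv ℝ g W (Pi.single i k) := by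
  rw [← Function.update_eq_self i W] at hg
  have hsingle :
      (fun j => Pi.single (M := fun _ => E →L[ℝ] E) i (.id ℝ E) j k) = Pi.single i k := by
    ext1 j
    rcases eq_or_ne j i with rfl | hj <;> simp [*]
  have h := congrArg (· k) (hg.hasFDerivAt.comp (W i) (hasFDerivAt_update W (W i))).fderiv
  simpa [hsingle, Function.comp_def] using h

end PartialDeriv

theorem fderiv_lagrangian_apply_s5 {m N : ℕ} {L : (Fin N → ℝ) → (Fin m → Fin N → ℝ) → ℝ}
    (hL : Differentiable ℝ fun q : (Fin N → ℝ) × (Fin m → Fin N → ℝ) => L q.1 q.2)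
    (a : Fin N → ℝ) (W : Fin m → Fin N → ℝ) (u : Fin N → ℝ) (K : Fin m → Fin N → ℝ) :
    fderiv ℝ (fun q : (Fin N → ℝ) × (Fin m → Fin N → ℝ) => L q.1 q.2) (a, W) (u, K) =
      ∑ j, gradX L a W j * u j + ∑ γ, ∑ j, gradV L γ a W j * K γ j := by
  have hsplit : (u, K) = (u, 0) + ∑ γ, ((0 : Fin N → ℝ), Pi.single γ (K γ)) := by
    ext1 <;> simp [Prod.fst_sum, Prod.snd_sum, Finset.univ_sum_single]
  have hW : DifferentiableAt ℝ (fun W' => L a W') W :=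
    (hL _).comp W (differentiableAt_const a |>.prodMk differentiableAt_id)
  rw [hsplit, map_add, map_sum]
  congr 1
  · rw [← fderiv_comp_prodMk_left_apply (hL _), ContinuousLinearMap.apply_eq_sum_mul_single]
    rfl
  · refine Finset.sum_congr rfl fun γ _ => ?_
    rw [← fderiv_comp_prodMk_right_apply (hL _), ← fderiv_comp_update_apply hW,
      ContinuousLinearMap.apply_eq_sum_mul_single]
    rfl

section Jet

variable {m N : ℕ}

def jetCLM (m N : ℕ) : ((Fin m → ℝ) →L[ℝ] (Fin N → ℝ)) →L[ℝ] (Fin m → Fin N → ℝ) :=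
  ContinuousLinearMap.pi fun γ => ContinuousLinearMap.apply ℝ (Fin N → ℝ) (Pi.single γ 1)

theorem jet_eq_jetCLM_comp (x : (Fin m → ℝ) → (Fin N → ℝ)) : jet x = jetCLM m N ∘ fderiv ℝ x :=
  rfl

theorem hasFDerivAt_jet_s5 {x : (Fin m → ℝ) → (Fin N → ℝ)} (hx : ContDiff ℝ 2 x) (t : Fin m → ℝ) :
    HasFDerivAt (jet x) ((jetCLM m N).comp (fderiv ℝ (fderiv ℝ x) t)) t := by
  have hdx : Differentiable ℝ (fderiv ℝ x) :=
    (hx.fderiv_right (m := 1) (by norm_num)).differentiable one_ne_zero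
  rw [jet_eq_jetCLM_comp]
  exact (jetCLM m N).hasFDerivAt.comp t (hdx t).hasFDerivAt

theorem fderiv_lagrangian_comp_jet_apply {x : (Fin m → ℝ) → (Fin N → ℝ)} (hx : ContDiff ℝ 2 x)
    {L : (Fin N → ℝ) → (Fin m → Fin N → ℝ) → ℝ}
    (hL : Differentiable ℝ fun q : (Fin N → ℝ) × (Fin m → Fin N → ℝ) => L q.1 q.2)
    (t : Fin m → ℝ) (β : Fin m) :
    fderiv ℝ (fun t => L (x t) (jet x t)) t (Pi.single β 1) =
      ∑ j, gradX L (x t) (jet x t) j * pdv x β t j +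
        ∑ γ, ∑ j, gradV L γ (x t) (jet x t) j *
          fderiv ℝ (fderiv ℝ x) t (Pi.single β 1) (Pi.single γ 1) j := by
  have hxt := ((hx.differentiable two_ne_zero) t).hasFDerivAt.prodMk (hasFDerivAt_jet_s5 hx t)
  exact congrArg (· (Pi.single β 1)) ((hL _).hasFDerivAt.comp t hxt).fderiv |>.trans
    (fderiv_lagrangian_apply_s5 hL _ _ _ _)

end Jet

section Legendre

variable {m N : ℕ} {L : Fin m → (Fin N → ℝ) → (Fin m → Fin N → ℝ) → ℝ}
  {V : Fin m → (Fin N → ℝ) → (Fin N → ℝ) → (Fin N → ℝ)}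
  (hL : ∀ α, Differentiable ℝ fun q : (Fin N → ℝ) × (Fin m → Fin N → ℝ) => L α q.1 q.2)
  (hV : ∀ α, Differentiable ℝ fun q : (Fin N → ℝ) × (Fin N → ℝ) => V α q.1 q.2)
  (hLeg1 : ∀ (a b : Fin N → ℝ) (α β : Fin m), α ≠ β → gradV (L α) β a (fun γ => V γ a b) = 0)
  (hLeg2 : ∀ (a b : Fin N → ℝ) (α : Fin m), gradV (L α) α a (fun γ => V γ a b) = b)

include hLeg1 hLeg2 in
theorem sum_gradV_mul_eq_of_legendre (a b : Fin N → ℝ) (α : Fin m) (K : Fin m → Fin N → ℝ) :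
    ∑ γ, ∑ j, gradV (L α) γ a (fun δ => V δ a b) j * K γ j = ∑ j, b j * K α j := by
  rw [Finset.sum_eq_single α (fun γ _ hγ => by simp [hLeg1 a b α γ (Ne.symm hγ)]) (by simp),
    hLeg2]

variable (L V) in
def hamiltonian (α : Fin m) (a b : Fin N → ℝ) : ℝ :=
  (∑ j, b j * V α a b j) - L α a (fun γ => V γ a b)

include hL hV hLeg1 hLeg2 in
theorem fderiv_hamiltonian_apply (α : Fin m) (a b u k : Fin N → ℝ) :
    fderiv ℝ (fun q : (Fin N → ℝ) × (Fin N → ℝ) => hamiltonian L V α q.1 q.2) (a, b) (u, k) =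
      ∑ j, k j * V α a b j - ∑ j, gradX (L α) a (fun γ => V γ a b) j * u j := by
  set DV := fun γ => fderiv ℝ (fun q : (Fin N → ℝ) × (Fin N → ℝ) => V γ q.1 q.2) (a, b)
  have hb : ∀ j, HasFDerivAt (fun q : (Fin N → ℝ) × (Fin N → ℝ) => q.2 j)
      ((ContinuousLinearMap.proj j).comp (ContinuousLinearMap.snd ℝ _ _)) (a, b) :=
    fun j => by fun_prop
  have hVα : ∀ j, HasFDerivAt (fun q : (Fin N → ℝ) × (Fin N → ℝ) => V α q.1 q.2 j)
      ((ContinuousLinearMap.proj j).comp (DV α)) (a, b) :=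
    fun j => ((hasFDerivAt_apply (𝕜 := ℝ) j (V α a b)).comp (a, b) (hV α (a, b)).hasFDerivAt :)
  have hpV : HasFDerivAt (fun q : (Fin N → ℝ) × (Fin N → ℝ) => ∑ j, q.2 j * V α q.1 q.2 j)
      (∑ j, (b j • (ContinuousLinearMap.proj j).comp (DV α) +
        V α a b j • (ContinuousLinearMap.proj j).comp (ContinuousLinearMap.snd ℝ _ _))) (a, b) :=
    HasFDerivAt.fun_sum fun j _ => (hb j).mul (hVα j)
  have hLV : HasFDerivAt (fun q : (Fin N → ℝ) × (Fin N → ℝ) => L α q.1 (fun γ => V γ q.1 q.2))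
      ((fderiv ℝ (fun q : (Fin N → ℝ) × (Fin m → Fin N → ℝ) => L α q.1 q.2)
        (a, fun γ => V γ a b)).comp
        ((ContinuousLinearMap.fst ℝ _ _).prod (ContinuousLinearMap.pi DV))) (a, b) :=
    (hL α _).hasFDerivAt.comp (a, b)
      ((hasFDerivAt_fst (𝕜 := ℝ)).prodMk (hasFDerivAt_pi.2 fun γ => (hV γ (a, b)).hasFDerivAt))
  rw [show (fun q : (Fin N → ℝ) × (Fin N → ℝ) => hamiltonian L V α q.1 q.2) =
    fun q => (∑ j, q.2 j * V α q.1 q.2 j) - L α q.1 (fun γ => V γ q.1 q.2) from rfl,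
    (hpV.fun_sub hLV).fderiv]
  simp only [Finset.sum_add_distrib, sub_apply, add_apply, sum_apply, smul_apply,
    ContinuousLinearMap.comp_apply, ContinuousLinearMap.proj_apply, smul_eq_mul,
    ContinuousLinearMap.coe_snd', mul_comm (V α a b _), ContinuousLinearMap.prod_apply,
    ContinuousLinearMap.coe_fst', ContinuousLinearMap.coe_pi', fderiv_lagrangian_apply_s5 (hL α),
    sum_gradV_mul_eq_of_legendre hLeg1 hLeg2]
  ring

include hL hV in
theorem differentiable_hamiltonian_s5 (α : Fin m) :
    Differentiable ℝ fun q : (Fin N → ℝ) × (Fin N → ℝ) => hamiltonian L V α q.1 q.2 := by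
  unfold hamiltonian
  fun_prop

include hL hV hLeg1 hLeg2 in
theorem gradP_hamiltonian_s5 (α : Fin m) (a b : Fin N → ℝ) :
    gradP (hamiltonian L V α) a b = V α a b := by
  ext j
  rw [gradP, fderiv_comp_prodMk_right_apply (differentiable_hamiltonian_s5 hL hV α _),
    fderiv_hamiltonian_apply hL hV hLeg1 hLeg2]
  simp [Pi.single_apply]

include hL hV hLeg1 hLeg2 in
theorem gradQ_hamiltonian_s5 (α : Fin m) (a b : Fin N → ℝ) :
    gradQ (hamiltonian L V α) a b = -gradX (L α) a (fun γ => V γ a b) := by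
  ext j
  rw [gradQ, fderiv_comp_prodMk_left_apply (differentiable_hamiltonian_s5 hL hV α _),
    fderiv_hamiltonian_apply hL hV hLeg1 hLeg2]
  simp [Pi.single_apply]

include hL hV hLeg1 hLeg2 in
theorem sum_gradX_mul_comm_of_poisson_eq_zero {α β : Fin m} {a b : Fin N → ℝ}
    (hinv : poisson (hamiltonian L V α) (hamiltonian L V β) a b = 0) :
    ∑ j, gradX (L α) a (fun γ => V γ a b) j * V β a b j =
      ∑ j, gradX (L β) a (fun γ => V γ a b) j * V α a b j := by
  simp only [poisson, gradP_hamiltonian_s5 hL hV hLeg1 hLeg2,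
    gradQ_hamiltonian_s5 hL hV hLeg1 hLeg2, Pi.neg_apply, neg_mul, sub_neg_eq_add,
    Finset.sum_add_distrib, Finset.sum_neg_distrib, mul_comm (V α a b _)] at hinv
  linarith

include hL hV hLeg1 hLeg2 in
theorem fderiv_lagrangian_comp_jet_single_comm
    (hinv : ∀ (α β : Fin m) (a b : Fin N → ℝ),
      poisson (hamiltonian L V α) (hamiltonian L V β) a b = 0)
    {x p : (Fin m → ℝ) → (Fin N → ℝ)} (hx : ContDiff ℝ 2 x)
    (hEL1 : ∀ (t : Fin m → ℝ) (α : Fin m), pdv x α t = V α (x t) (p t))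
    (t : Fin m → ℝ) (α β : Fin m) :
    fderiv ℝ (fun t => L α (x t) (jet x t)) t (Pi.single β 1) =
      fderiv ℝ (fun t => L β (x t) (jet x t)) t (Pi.single α 1) := by
  have hjet : jet x t = fun γ => V γ (x t) (p t) := funext (hEL1 t)
  have along (α β : Fin m) :
      fderiv ℝ (fun t => L α (x t) (jet x t)) t (Pi.single β 1) =
        ∑ j, gradX (L α) (x t) (fun γ => V γ (x t) (p t)) j * V β (x t) (p t) j +
          ∑ j, p t j * fderiv ℝ (fderiv ℝ x) t (Pi.single β 1) (Pi.single α 1) j := by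
    rw [fderiv_lagrangian_comp_jet_apply hx (hL α), hjet, hEL1,
      sum_gradV_mul_eq_of_legendre hLeg1 hLeg2]
  rw [along, along, sum_gradX_mul_comm_of_poisson_eq_zero hL hV hLeg1 hLeg2 (hinv α β _ _),
    hx.contDiffAt.isSymmSndFDerivAt (by simp) (Pi.single β 1)]

end Legendre

theorem action_path_independent_general {m N : ℕ}
    (L : Fin m → (Fin N → ℝ) → (Fin m → (Fin N → ℝ)) → ℝ)
    (hL : ∀ α, ContDiff ℝ (⊤ : ℕ∞)
      (fun q : (Fin N → ℝ) × (Fin m → (Fin N → ℝ)) => L α q.1 q.2))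
    (V : Fin m → (Fin N → ℝ) → (Fin N → ℝ) → (Fin N → ℝ))
    (hV : ∀ α, ContDiff ℝ (⊤ : ℕ∞)
      (fun q : (Fin N → ℝ) × (Fin N → ℝ) => V α q.1 q.2))
    (hLeg1 : ∀ (a b : Fin N → ℝ) (α β : Fin m), α ≠ β →
      gradV (L α) β a (fun γ => V γ a b) = 0)
    (hLeg2 : ∀ (a b : Fin N → ℝ) (α : Fin m),
      gradV (L α) α a (fun γ => V γ a b) = b)
    (H : Fin m → (Fin N → ℝ) → (Fin N → ℝ) → ℝ)
    (hH : ∀ (α : Fin m) (a b : Fin N → ℝ),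
      H α a b = (∑ j, b j * V α a b j) - L α a (fun γ => V γ a b))
    (hinv : ∀ (α β : Fin m) (a b : Fin N → ℝ), poisson (H α) (H β) a b = 0)
    (x p : (Fin m → ℝ) → (Fin N → ℝ))
    (hx : ContDiff ℝ (⊤ : ℕ∞) x)
    (hEL1 : ∀ (t : Fin m → ℝ) (α : Fin m), pdv x α t = V α (x t) (p t))
    (Γ₀ Γ₁ : ℝ → (Fin m → ℝ))
    (hΓ₀ : ContDiff ℝ (⊤ : ℕ∞) Γ₀) (hΓ₁ : ContDiff ℝ (⊤ : ℕ∞) Γ₁)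
    (h0 : Γ₀ 0 = Γ₁ 0) (h1 : Γ₀ 1 = Γ₁ 1) :
    action L x Γ₀ = action L x Γ₁ := by
  obtain rfl : H = hamiltonian L V := funext fun α => funext fun a => funext (hH α a)
  have hL' (α : Fin m) := (hL α).differentiable (by simp)
  have hx2 : ContDiff ℝ 2 x := hx.of_le (WithTop.coe_le_coe.2 le_top)
  have hℓ (α : Fin m) : Differentiable ℝ fun t => L α (x t) (jet x t) := fun t =>
    (hL' α _).comp t
      ((hx2.differentiable two_ne_zero t).prodMk (hasFDerivAt_jet_s5 hx2 t).differentiableAt)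
  have haction (Γ : ℝ → (Fin m → ℝ)) : action L x Γ =
      ∫ s in (0 : ℝ)..1, coordOneForm (fun α t => L α (x t) (jet x t)) (Γ s) (deriv Γ s) := by
    simp [action]
  rw [haction, haction]
  exact integral_apply_deriv_eq_of_fderiv_symmetric (differentiable_coordOneForm hℓ)
    (fun t => fderiv_coordOneForm_symmetric (fun α => hℓ α t)
      (fderiv_lagrangian_comp_jet_single_comm hL' (fun α => (hV α).differentiable (by simp))
        hLeg1 hLeg2 hinv hx2 hEL1 t))
    (hΓ₀.of_le (WithTop.coe_le_coe.2 le_top)) (hΓ₁.of_le (WithTop.coe_le_coe.2 le_top)) h0 h1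

/-- If the multi-time Lagrangian 1-form is Legendre transformable and the
Hamilton functions are in involution, then on solutions of the multi-time Euler–Lagrange
equations the action is independent of the path joining two given points of multi-time. -/
theorem action_path_independent {m N : ℕ}
    (L : Fin m → (Fin N → ℝ) → (Fin m → (Fin N → ℝ)) → ℝ)
    (hL : ∀ α, ContDiff ℝ (⊤ : ℕ∞)
      (fun q : (Fin N → ℝ) × (Fin m → (Fin N → ℝ)) => L α q.1 q.2))
    (V : Fin m → (Fin N → ℝ) → (Fin N → ℝ) → (Fin N → ℝ))
    (hV : ∀ α, ContDiff ℝ (⊤ : ℕ∞)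
      (fun q : (Fin N → ℝ) × (Fin N → ℝ) => V α q.1 q.2))
    (hLeg1 : ∀ (a b : Fin N → ℝ) (α β : Fin m), α ≠ β →
      gradV (L α) β a (fun γ => V γ a b) = 0)
    (hLeg2 : ∀ (a b : Fin N → ℝ) (α : Fin m),
      gradV (L α) α a (fun γ => V γ a b) = b)
    (H : Fin m → (Fin N → ℝ) → (Fin N → ℝ) → ℝ)
    (hH : ∀ (α : Fin m) (a b : Fin N → ℝ),
      H α a b = (∑ j, b j * V α a b j) - L α a (fun γ => V γ a b))
    (hinv : ∀ (α β : Fin m) (a b : Fin N → ℝ), poisson (H α) (H β) a b = 0)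
    (x p : (Fin m → ℝ) → (Fin N → ℝ))
    (hx : ContDiff ℝ (⊤ : ℕ∞) x) (hp : ContDiff ℝ (⊤ : ℕ∞) p)
    (hEL1 : ∀ (t : Fin m → ℝ) (α : Fin m), pdv x α t = V α (x t) (p t))
    (hEL2 : ∀ (t : Fin m → ℝ) (α : Fin m), pdv p α t = gradX (L α) (x t) (jet x t))
    (Γ₀ Γ₁ : ℝ → (Fin m → ℝ))
    (hΓ₀ : ContDiff ℝ (⊤ : ℕ∞) Γ₀) (hΓ₁ : ContDiff ℝ (⊤ : ℕ∞) Γ₁)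
    (h0 : Γ₀ 0 = Γ₁ 0) (h1 : Γ₀ 1 = Γ₁ 1) :
    action L x Γ₀ = action L x Γ₁ :=
  action_path_independent_general L hL V hV hLeg1 hLeg2 H hH hinv x p hx hEL1 Γ₀ Γ₁ hΓ₀ hΓ₁ h0 h1
end
end
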